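/- If (A, R) is a Rota-Baxter algebra of weight zero, i.e. A is an associative (not necessarily unital) algebra over ℚ and R : A → A is a linear map satisfying R(x)·R(y) = R(R(x)·y) + R(x·R(y)) for all x, y ∈ A, then the operations x ≺ y := x·R(y) and x ≻ y := R(x)·y make A into a dendriform algebra, i.e. they satisfy (x ≻ y) ≺ z = x ≻ (y ≺ z), (x ≺ y) ≺ z = x ≺ (y ≺ z) + x ≺ (y ≻ z), and x ≻ (y ≻ z) = (x ≻ y) ≻ z + (x ≺ y) ≻ z for all x, y, z ∈ A. -/
import Mathlib

theorem STMT {A : Type*} [NonUnitalRing A] [Module ℚ A]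
    [SMulCommClass ℚ A A] [IsScalarTower ℚ A A]
    (R : A →ₗ[ℚ] A)
    (hR : ∀ x y : A, R x * R y = R (R x * y) + R (x * R y)) :
    ∀ x y z : A,
      ((R x * y) * R z = R x * (y * R z)) ∧
      ((x * R y) * R z = x * R (y * R z) + x * R (R y * z)) ∧
      (R x * (R y * z) = R (R x * y) * z + R (x * R y) * z) := by
  intro x y z
  refine ⟨mul_assoc _ _ _, ?_, ?_⟩
  · rw [mul_assoc, hR, mul_add, add_comm]
  · rw [← mul_assoc, hR, add_mul]
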